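/- arXiv:2402.14951 — 2 statements merged into one kernel-verified Lean document; each statement's English description precedes it below -/
import Mathlib

section
/- Let H and Ψ be positive semi-definite d×d matrices, σ ≥ 0, M ≥ 1 with tr(HΨ)+σ² > 0, and Ω := ((M+1)/M) H^{1/2} Ψ H^{1/2} + ((tr(H Ψ) + σ²)/M) I_d. Then with Γ* := Ψ H^{1/2} Ω^{−1} H^{−1/2} one has (I_d − H Γ*) H = (1/M) H^{1/2} Ω^{−1} (H^{1/2} Ψ H^{1/2} + (tr(H^{1/2} Ψ H^{1/2}) + σ²) I_d) H^{1/2}. -/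
set_option maxHeartbeats 1000000

open Matrix

section

open scoped ComplexOrder

/-- The square root of a positive semi-definite matrix, as defined in the older Mathlib
(`Matrix.PosSemidef.sqrt`, since removed). -/
noncomputable def Matrix.PosSemidef.sqrt {n : Type*} {𝕜 : Type*} [Fintype n] [DecidableEq n]
    [RCLike 𝕜] {A : Matrix n n 𝕜} (hA : A.PosSemidef) : Matrix n n 𝕜 :=
  (hA.1.eigenvectorUnitary : Matrix n n 𝕜) *
    diagonal (fun i => ((Real.sqrt (hA.1.eigenvalues i) : ℝ) : 𝕜)) *
    (star hA.1.eigenvectorUnitary : Matrix n n 𝕜)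

end

lemma mySqrtHerm {d : ℕ} {H : Matrix (Fin d) (Fin d) ℝ} (hH : H.PosSemidef) :
    hH.sqrtᴴ = hH.sqrt := by
  unfold Matrix.PosSemidef.sqrt
  rw [conjTranspose_mul, conjTranspose_mul, diagonal_conjTranspose]
  simp only [Matrix.star_eq_conjTranspose, conjTranspose_conjTranspose, Function.comp_def,
    star_trivial, Matrix.mul_assoc]

lemma mySqrtMulSelf {d : ℕ} {H : Matrix (Fin d) (Fin d) ℝ} (hH : H.PosSemidef) :
    hH.sqrt * hH.sqrt = H := by
  unfold Matrix.PosSemidef.sqrt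
  conv_rhs => rw [hH.1.spectral_theorem]
  have hU : (star hH.1.eigenvectorUnitary : Matrix (Fin d) (Fin d) ℝ) *
      (hH.1.eigenvectorUnitary : Matrix (Fin d) (Fin d) ℝ) = 1 := Unitary.coe_star_mul_self _
  have hD : diagonal (fun i => (RCLike.ofReal (Real.sqrt (hH.1.eigenvalues i)) : ℝ)) *
      diagonal (fun i => (RCLike.ofReal (Real.sqrt (hH.1.eigenvalues i)) : ℝ)) =
      diagonal (RCLike.ofReal ∘ hH.1.eigenvalues) := by
    rw [diagonal_mul_diagonal]
    congr 1
    funext i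
    simp [Real.mul_self_sqrt (hH.eigenvalues_nonneg i)]
  simp only [Matrix.mul_assoc] at hD ⊢
  rw [← Matrix.mul_assoc (star _ : Matrix (Fin d) (Fin d) ℝ), hU, Matrix.one_mul,
    ← Matrix.mul_assoc (diagonal _), hD]
  simp [Unitary.conjStarAlgAut_apply, Matrix.mul_assoc]

lemma mySmulPosSemidef {d : ℕ} {A : Matrix (Fin d) (Fin d) ℝ} (hA : A.PosSemidef)
    {c : ℝ} (hc : 0 ≤ c) : (c • A).PosSemidef := by
  exact hA.smul hc

lemma mySmulPosDef {d : ℕ} {A : Matrix (Fin d) (Fin d) ℝ} (hA : A.PosDef)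
    {c : ℝ} (hc : 0 < c) : (c • A).PosDef := by
  exact hA.smul hc

/-- With Ω := ((M+1)/M) H^{1/2} Ψ H^{1/2} + ((tr(HΨ)+σ²)/M) I and
Γ* := Ψ H^{1/2} Ω⁻¹ H^{-1/2}, one has
(I − H Γ*) H = (1/M) H^{1/2} Ω⁻¹ (H^{1/2} Ψ H^{1/2} + (tr(H^{1/2} Ψ H^{1/2}) + σ²) I) H^{1/2}. -/
theorem one_sub_HGammastar_mul_H {d : ℕ} (H Ψ Hsp : Matrix (Fin d) (Fin d) ℝ)
    (hH : H.PosSemidef) (hΨ : Ψ.PosSemidef)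
    (h1' : hH.sqrt * Hsp * hH.sqrt = hH.sqrt) (h2' : Hsp * hH.sqrt * Hsp = Hsp)
    (h3' : (hH.sqrt * Hsp)ᵀ = hH.sqrt * Hsp) (h4' : (Hsp * hH.sqrt)ᵀ = Hsp * hH.sqrt)
    (σ : ℝ) (hσ : 0 ≤ σ) (M : ℕ) (hM : 1 ≤ M)
    (htr : 0 < (H * Ψ).trace + σ ^ 2) :
    letI Ω : Matrix (Fin d) (Fin d) ℝ :=
      (((M : ℝ) + 1) / M) • (hH.sqrt * Ψ * hH.sqrt) +
        (((H * Ψ).trace + σ ^ 2) / M) • (1 : Matrix (Fin d) (Fin d) ℝ)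
    (1 - H * (Ψ * hH.sqrt * Ω⁻¹ * Hsp)) * H =
      ((M : ℝ))⁻¹ • (hH.sqrt * Ω⁻¹ *
        (hH.sqrt * Ψ * hH.sqrt +
          ((hH.sqrt * Ψ * hH.sqrt).trace + σ ^ 2) • (1 : Matrix (Fin d) (Fin d) ℝ)) *
        hH.sqrt) := by
  set Ω : Matrix (Fin d) (Fin d) ℝ :=
      (((M : ℝ) + 1) / M) • (hH.sqrt * Ψ * hH.sqrt) +
        (((H * Ψ).trace + σ ^ 2) / M) • (1 : Matrix (Fin d) (Fin d) ℝ) with hΩ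
  set S := hH.sqrt with hS
  set A := S * Ψ * S with hA
  clear_value Ω S A
  have hMpos : (0:ℝ) < M := by exact_mod_cast hM
  have hMne : (M:ℝ) ≠ 0 := ne_of_gt hMpos
  -- A is PSD
  have hApsd : A.PosSemidef := by
    have h := hΨ.mul_mul_conjTranspose_same hH.sqrt
    have hSt : hH.sqrtᴴ = hH.sqrt := mySqrtHerm hH
    rw [hSt] at h
    rwa [hA, hS]
  -- Ω is PD hence a unit
  have hΩpd : Ω.PosDef := by
    rw [hΩ]
    refine Matrix.PosDef.posSemidef_add (mySmulPosSemidef hApsd ?_)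
      (mySmulPosDef Matrix.PosDef.one ?_)
    · positivity
    · positivity
  have hunit : IsUnit Ω.det := (Matrix.isUnit_iff_isUnit_det _).mp hΩpd.isUnit
  have hΩinv : Ω * Ω⁻¹ = 1 := Matrix.mul_nonsing_inv _ hunit
  have hΩinv' : Ω⁻¹ * Ω = 1 := Matrix.nonsing_inv_mul _ hunit
  -- Ω commutes with A
  have hcomm : A * Ω = Ω * A := by
    rw [hΩ]
    simp only [Matrix.mul_add, Matrix.add_mul, Matrix.mul_smul, Matrix.smul_mul,
      Matrix.mul_one, Matrix.one_mul]
  have hcomm' : A * Ω⁻¹ = Ω⁻¹ * A := by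
    calc A * Ω⁻¹ = (Ω⁻¹ * Ω) * A * Ω⁻¹ := by rw [hΩinv', Matrix.one_mul]
    _ = Ω⁻¹ * (Ω * A) * Ω⁻¹ := by simp only [Matrix.mul_assoc]
    _ = Ω⁻¹ * (A * Ω) * Ω⁻¹ := by rw [hcomm]
    _ = Ω⁻¹ * A * (Ω * Ω⁻¹) := by simp only [Matrix.mul_assoc]
    _ = Ω⁻¹ * A := by rw [hΩinv, Matrix.mul_one]
  have hSS : S * S = H := by rw [hS]; exact mySqrtMulSelf hH
  -- trace identity
  have htrA : A.trace = (H * Ψ).trace := by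
    rw [hA, ← hSS, Matrix.trace_mul_cycle, Matrix.mul_assoc]
  -- key projection identity
  have hAP : A * (Hsp * S) = A := by
    calc A * (Hsp * S) = S * Ψ * (S * Hsp * S) := by
          simp only [hA, Matrix.mul_assoc]
    _ = A := by rw [h1', ← hA]
  -- compute LHS
  have key : H * (Ψ * S * Ω⁻¹ * Hsp) * H = S * (Ω⁻¹ * A) * S := by
    calc H * (Ψ * S * Ω⁻¹ * Hsp) * H
        = (S * S) * (Ψ * S * Ω⁻¹ * Hsp) * (S * S) := by rw [hSS]
    _ = S * (A * Ω⁻¹ * (Hsp * S)) * S := by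
        rw [hA]; simp only [Matrix.mul_assoc]
    _ = S * (Ω⁻¹ * A * (Hsp * S)) * S := by rw [hcomm']
    _ = S * (Ω⁻¹ * (A * (Hsp * S))) * S := by rw [Matrix.mul_assoc Ω⁻¹]
    _ = S * (Ω⁻¹ * A) * S := by rw [hAP]
  -- scalar identity
  have hscal : ((M:ℝ))⁻¹ • (A + (A.trace + σ ^ 2) • (1 : Matrix (Fin d) (Fin d) ℝ)) = Ω - A := by
    rw [hΩ, htrA]
    match_scalars <;> field_simp <;> ring
  calc (1 - H * (Ψ * S * Ω⁻¹ * Hsp)) * H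
      = H - H * (Ψ * S * Ω⁻¹ * Hsp) * H := by rw [Matrix.sub_mul, Matrix.one_mul]
  _ = H - S * (Ω⁻¹ * A) * S := by rw [key]
  _ = S * Ω⁻¹ * (Ω - A) * S := by
      rw [Matrix.mul_sub, Matrix.sub_mul, Matrix.mul_assoc S Ω⁻¹ Ω, hΩinv', Matrix.mul_one,
        hSS, Matrix.mul_assoc S Ω⁻¹ A]
  _ = ((M : ℝ))⁻¹ • (S * Ω⁻¹ * (A + (A.trace + σ ^ 2) • (1 : Matrix (Fin d) (Fin d) ℝ)) * S) := by
      rw [← hscal, Matrix.mul_smul, Matrix.smul_mul]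
end

section
/- Let H be a non-zero positive semi-definite d×d matrix with largest eigenvalue λ₁ and smallest positive eigenvalue λ₋₁ > 0, let H_Γ ⪰ (1/(M+1)) H for all t (where Γ may vary with t), and suppose β : [0,∞) → R^d solves the ODE dβ/dt = −H_Γ(t) (β − β*) with β* fixed. Then for all t ≥ 0, ‖P(β(t) − β*)‖₂² ≤ exp(−2 λ₋₁ t / (M+1)) · ‖P(β(0) − β*)‖₂², where P is the orthogonal projection onto the image of H; moreover the component of β(t) − β* in the null space of H stays constant: (I − H H^+)(β(t) − β*) = (I − H H^+)(β(0) − β*). -/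
open Matrix

lemma key_psd {d : ℕ} (H P : Matrix (Fin d) (Fin d) ℝ) (hH : H.PosSemidef)
    (hPH : P * H = H) (hPt : Pᵀ = P) (hPP : P * P = P)
    (hP0 : ∀ v : Fin d → ℝ, H *ᵥ v = 0 → P *ᵥ v = 0)
    (lam : ℝ) (hlam_pos : 0 < lam)
    (hlam_min : ∀ μ : ℝ, 0 < μ → (∃ v : Fin d → ℝ, v ≠ 0 ∧ H *ᵥ v = μ • v) → lam ≤ μ) :
    (H - lam • P).PosSemidef := by
  have hA := hH.isHermitian
  set U : Matrix (Fin d) (Fin d) ℝ := (hA.eigenvectorUnitary : Matrix (Fin d) (Fin d) ℝ) with hU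
  set μ : Fin d → ℝ := hA.eigenvalues with hμ
  classical
  set ind : Fin d → ℝ := fun j => if μ j = 0 then 0 else 1 with hind
  -- P acts on eigenvectors
  have hPb : ∀ j, P *ᵥ ⇑(hA.eigenvectorBasis j) = ind j • ⇑(hA.eigenvectorBasis j) := by
    intro j
    by_cases h0 : μ j = 0
    · have hHb : H *ᵥ ⇑(hA.eigenvectorBasis j) = 0 := by
        rw [hA.mulVec_eigenvectorBasis, ← hμ, h0, zero_smul]
      simp [hind, h0, hP0 _ hHb]
    · have hb := hA.mulVec_eigenvectorBasis j
      have : P *ᵥ ⇑(hA.eigenvectorBasis j) = ⇑(hA.eigenvectorBasis j) := by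
        have : ⇑(hA.eigenvectorBasis j) = H *ᵥ ((μ j)⁻¹ • ⇑(hA.eigenvectorBasis j)) := by
          rw [mulVec_smul, hb, ← hμ, smul_smul, inv_mul_cancel₀ h0, one_smul]
        rw [this, mulVec_mulVec, hPH]
      simp [hind, h0, this]
  have hcol : ∀ j, (P * U) *ᵥ Pi.single j 1 = (U * diagonal ind) *ᵥ Pi.single j 1 := by
    intro j
    rw [← mulVec_mulVec, ← mulVec_mulVec, hA.eigenvectorUnitary_mulVec,
      Matrix.diagonal_mulVec_single]
    rw [hPb j]
    have : Pi.single j (ind j * 1) = ind j • (Pi.single j 1 : Fin d → ℝ) := by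
      ext i; by_cases h : i = j <;> simp [Pi.single_apply, h]
    rw [this, mulVec_smul, hA.eigenvectorUnitary_mulVec]
  have hPU : P * U = U * diagonal ind := by
    ext i j
    have := congrFun (hcol j) i
    simpa [mulVec_single] using this
  have hUU : U * star U = 1 := (Matrix.mem_unitaryGroup_iff).mp hA.eigenvectorUnitary.2
  have hUU' : star U * U = 1 := (Matrix.mem_unitaryGroup_iff').mp hA.eigenvectorUnitary.2
  have hHspec : H = U * diagonal μ * star U := by
    have := hA.spectral_theorem
    simpa [RCLike.ofReal_real_eq_id] using this
  have hPspec : P = U * diagonal ind * star U := by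
    calc P = P * (U * star U) := by rw [hUU, mul_one]
    _ = (P * U) * star U := by rw [mul_assoc]
    _ = U * diagonal ind * star U := by rw [hPU]
  have hdiff : H - lam • P = U * diagonal (fun j => μ j - lam * ind j) * star U := by
    rw [hHspec, hPspec]
    have : (fun j => μ j - lam * ind j) = μ - lam • ind := rfl
    have hdd : diagonal (μ - lam • ind) = diagonal μ - lam • diagonal ind := by
      ext i j; by_cases h : i = j <;> simp [diagonal, h]
    rw [this, hdd]
    simp only [Matrix.mul_sub, Matrix.sub_mul, Matrix.mul_smul, Matrix.smul_mul]
  rw [hdiff]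
  apply Matrix.PosSemidef.mul_mul_conjTranspose_same
  · refine Matrix.posSemidef_diagonal_iff.mpr fun j => ?_
    by_cases h0 : μ j = 0
    · simp [hind, h0]
    · have hμpos : 0 < μ j := lt_of_le_of_ne (hH.eigenvalues_nonneg j) (Ne.symm h0)
      have hlamle : lam ≤ μ j := by
        apply hlam_min _ hμpos
        refine ⟨⇑(hA.eigenvectorBasis j), ?_, hA.mulVec_eigenvectorBasis j⟩
        have := hA.eigenvectorBasis.orthonormal.ne_zero j
        intro hc
        apply this
        ext i
        exact congrFun hc i
      simp only [hind, if_neg h0, mul_one]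
      linarith


/-- Convergence of the β-component of the gradient flow. Let H be a non-zero PSD
matrix with Moore–Penrose pseudo-inverse Hp and smallest positive eigenvalue lam,
let Γ : ℝ → ℝ^{d×d} be a (time-varying) matrix path and define
H_Γ(t) := (I − Γ(t) H)ᵀ H (I − Γ(t) H) + (tr(H Γ(t)ᵀ H Γ(t))/M) H + (1/M) H Γ(t)ᵀ H Γ(t) H.
Suppose H_Γ(t) ⪰ H/(M+1) for all t and β solves dβ/dt = −H_Γ(t)(β − β*). Then for
all t ≥ 0 the squared Euclidean norm of the projection of β(t) − β* onto the image
of H decays as exp(−2 lam t/(M+1)), and the component of β(t) − β* in the null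
space of H stays constant. -/
theorem gradient_flow_beta_convergence {d : ℕ} (H Hp : Matrix (Fin d) (Fin d) ℝ)
    (hH : H.PosSemidef) (hne : H ≠ 0)
    (h1 : H * Hp * H = H) (h2 : Hp * H * Hp = Hp)
    (h3 : (H * Hp)ᵀ = H * Hp) (h4 : (Hp * H)ᵀ = Hp * H)
    (lam : ℝ) (hlam_pos : 0 < lam)
    (hlam_eig : ∃ v : Fin d → ℝ, v ≠ 0 ∧ H *ᵥ v = lam • v)
    (hlam_min : ∀ μ : ℝ, 0 < μ → (∃ v : Fin d → ℝ, v ≠ 0 ∧ H *ᵥ v = μ • v) → lam ≤ μ)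
    (M : ℕ) (hM : 1 ≤ M)
    (Γ : ℝ → Matrix (Fin d) (Fin d) ℝ)
    (HΓ : ℝ → Matrix (Fin d) (Fin d) ℝ)
    (hHΓ : ∀ t, HΓ t = (1 - Γ t * H)ᵀ * H * (1 - Γ t * H) +
        ((H * (Γ t)ᵀ * H * Γ t).trace / M) • H +
        ((M : ℝ))⁻¹ • (H * (Γ t)ᵀ * H * Γ t * H))
    (hPSD : ∀ t : ℝ, (HΓ t - (((M : ℝ) + 1))⁻¹ • H).PosSemidef)
    (βstar : Fin d → ℝ) (β : ℝ → Fin d → ℝ)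
    (hODE : ∀ t : ℝ, HasDerivAt β (-(HΓ t *ᵥ (β t - βstar))) t) :
    ∀ t : ℝ, 0 ≤ t →
      (∑ i, (((H * Hp) *ᵥ (β t - βstar)) i) ^ 2 ≤
        Real.exp (-2 * lam * t / ((M : ℝ) + 1)) *
          ∑ i, (((H * Hp) *ᵥ (β 0 - βstar)) i) ^ 2) ∧
      ((β t - βstar) - (H * Hp) *ᵥ (β t - βstar) =
        (β 0 - βstar) - (H * Hp) *ᵥ (β 0 - βstar)) := by
  classical
  have Ht : Hᵀ = H := by
    ext i j
    have h := congrFun (congrFun hH.isHermitian.eq i) j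
    simpa [Matrix.conjTranspose_apply] using h
  set P := H * Hp with hPdef
  have hPH : P * H = H := h1
  have hPt : Pᵀ = P := h3
  have hPP : P * P = P := by rw [hPdef, ← Matrix.mul_assoc, h1]
  -- P kills the kernel of H
  have hP0 : ∀ v : Fin d → ℝ, H *ᵥ v = 0 → P *ᵥ v = 0 := by
    intro v hv
    rw [← dotProduct_self_eq_zero (v := P *ᵥ v)]
    have e1 : (P *ᵥ v) ⬝ᵥ (P *ᵥ v) = v ⬝ᵥ (P *ᵥ v) := by
      rw [dotProduct_mulVec, ← mulVec_transpose, hPt, mulVec_mulVec, hPP, dotProduct_comm]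
    rw [e1, hPdef, ← mulVec_mulVec, dotProduct_mulVec, ← mulVec_transpose, Ht, hv,
      zero_dotProduct]
  -- spectral gap inequality
  have hkey : (H - lam • P).PosSemidef :=
    key_psd H P hH hPH hPt hPP hP0 lam hlam_pos hlam_min
  -- HΓ has H on the left
  have hexpand : ∀ t, HΓ t = H * ((1 - (Γ t)ᵀ * H) * (1 - Γ t * H) +
      ((H * (Γ t)ᵀ * H * Γ t).trace / M) • 1 +
      ((M : ℝ))⁻¹ • ((Γ t)ᵀ * H * Γ t * H)) := by
    intro t
    rw [hHΓ t]
    have hT : (1 - Γ t * H)ᵀ = 1 - H * (Γ t)ᵀ := by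
      rw [transpose_sub, transpose_one, transpose_mul, Ht]
    rw [hT]
    simp only [Matrix.mul_add, Matrix.mul_sub, Matrix.sub_mul, Matrix.add_mul,
      Matrix.mul_one, Matrix.one_mul, Matrix.mul_smul, Matrix.smul_mul, Matrix.mul_assoc]
  have hPHΓ : ∀ t, P * HΓ t = HΓ t := by
    intro t
    rw [hexpand t, ← Matrix.mul_assoc, hPH]
  have hPHΓv : ∀ t (x : Fin d → ℝ), P *ᵥ (-(HΓ t *ᵥ x)) = -(HΓ t *ᵥ x) := by
    intro t x
    rw [mulVec_neg, mulVec_mulVec, hPHΓ]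
  -- derivatives
  have he : ∀ t, HasDerivAt (fun s => β s - βstar) (-(HΓ t *ᵥ (β t - βstar))) t :=
    fun t => (hODE t).sub_const βstar
  have hq : ∀ (t : ℝ) (i : Fin d), HasDerivAt (fun s => (P *ᵥ (β s - βstar)) i)
      ((P *ᵥ (-(HΓ t *ᵥ (β t - βstar)))) i) t := by
    intro t i
    have h := HasDerivAt.fun_sum (fun j (_ : j ∈ Finset.univ) =>
      ((hasDerivAt_pi.mp (he t)) j).const_mul (P i j))
    simpa [mulVec, dotProduct] using h
  have hg : ∀ t : ℝ, HasDerivAt (fun s => ∑ i, (P *ᵥ (β s - βstar)) i ^ 2)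
      (∑ i, (2:ℕ) * (P *ᵥ (β t - βstar)) i ^ 1 * (P *ᵥ (-(HΓ t *ᵥ (β t - βstar)))) i) t :=
    fun t => HasDerivAt.fun_sum (fun i _ => (hq t i).pow 2)
  -- quadratic form bound on the derivative
  have hMpos : (0:ℝ) < (M:ℝ) + 1 := by positivity
  set k : ℝ := 2 * lam / ((M:ℝ) + 1) with hk
  have hgnonneg : ∀ t : ℝ, 0 ≤ ∑ i, (P *ᵥ (β t - βstar)) i ^ 2 :=
    fun t => Finset.sum_nonneg fun i _ => sq_nonneg _
  have hquad : ∀ t : ℝ,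
      (∑ i, (2:ℕ) * (P *ᵥ (β t - βstar)) i ^ 1 * (P *ᵥ (-(HΓ t *ᵥ (β t - βstar)))) i)
        ≤ -k * ∑ i, (P *ᵥ (β t - βstar)) i ^ 2 := by
    intro t
    set x : Fin d → ℝ := β t - βstar with hx
    have hsum : (∑ i, (2:ℕ) * (P *ᵥ x) i ^ 1 * (P *ᵥ (-(HΓ t *ᵥ x))) i)
        = -2 * ((P *ᵥ x) ⬝ᵥ (HΓ t *ᵥ x)) := by
      rw [hPHΓv t x, dotProduct, Finset.mul_sum]
      apply Finset.sum_congr rfl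
      intro i _
      simp [pow_one]
      ring
    have hB : (P *ᵥ x) ⬝ᵥ (HΓ t *ᵥ x) = x ⬝ᵥ (HΓ t *ᵥ x) := by
      rw [dotProduct_comm, dotProduct_mulVec, ← mulVec_transpose, hPt,
        mulVec_mulVec, hPHΓ, dotProduct_comm]
    have hC : ((M:ℝ)+1)⁻¹ * (x ⬝ᵥ (H *ᵥ x)) ≤ x ⬝ᵥ (HΓ t *ᵥ x) := by
      have := (hPSD t).dotProduct_mulVec_nonneg x
      simp only [star_trivial, sub_mulVec, dotProduct_sub, smul_mulVec,
        dotProduct_smul, smul_eq_mul] at this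
      linarith
    have hD : lam * (x ⬝ᵥ (P *ᵥ x)) ≤ x ⬝ᵥ (H *ᵥ x) := by
      have := hkey.dotProduct_mulVec_nonneg x
      simp only [star_trivial, sub_mulVec, dotProduct_sub, smul_mulVec,
        dotProduct_smul, smul_eq_mul] at this
      linarith
    have hE : x ⬝ᵥ (P *ᵥ x) = ∑ i, (P *ᵥ x) i ^ 2 := by
      conv_lhs => rw [← hPP, ← mulVec_mulVec, dotProduct_mulVec, ← mulVec_transpose, hPt]
      rw [dotProduct]
      apply Finset.sum_congr rfl
      intro i _
      ring
    rw [hsum]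
    have c_nonneg : (0:ℝ) ≤ ((M:ℝ)+1)⁻¹ := by positivity
    have s1 : ((M:ℝ)+1)⁻¹ * (lam * ∑ i, (P *ᵥ x) i ^ 2) ≤ ((M:ℝ)+1)⁻¹ * (x ⬝ᵥ (H *ᵥ x)) := by
      apply mul_le_mul_of_nonneg_left _ c_nonneg
      rw [← hE]; exact hD
    have hrw : -k * ∑ i, (P *ᵥ x) i ^ 2
        = -2 * (((M:ℝ)+1)⁻¹ * (lam * ∑ i, (P *ᵥ x) i ^ 2)) := by
      rw [hk]; ring
    rw [hB, hrw]
    nlinarith [hC, s1]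
  -- part 2 : kernel component constant
  have hc : ∀ s : ℝ, HasDerivAt (fun r => (β r - βstar) - P *ᵥ (β r - βstar))
      (0 : Fin d → ℝ) s := by
    intro s
    have hPe : HasDerivAt (fun r => P *ᵥ (β r - βstar))
        (P *ᵥ (-(HΓ s *ᵥ (β s - βstar)))) s := hasDerivAt_pi.mpr (fun i => hq s i)
    have h := (he s).sub hPe
    rw [hPHΓv s, sub_self] at h
    exact h
  intro t ht
  constructor
  · -- exponential decay
    have hexp : ∀ s : ℝ, HasDerivAt (fun r : ℝ => Real.exp (k * r)) (Real.exp (k * s) * k) s := by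
      intro s
      have h1 : HasDerivAt (fun r : ℝ => k * r) k s := by
        simpa using (hasDerivAt_id s).const_mul k
      exact h1.exp
    have hF : ∀ s : ℝ, HasDerivAt (fun r => Real.exp (k * r) * ∑ i, (P *ᵥ (β r - βstar)) i ^ 2)
        (Real.exp (k * s) * k * (∑ i, (P *ᵥ (β s - βstar)) i ^ 2)
          + Real.exp (k * s) *
            (∑ i, (2:ℕ) * (P *ᵥ (β s - βstar)) i ^ 1 * (P *ᵥ (-(HΓ s *ᵥ (β s - βstar)))) i)) s :=
      fun s => (hexp s).mul (hg s)
    have hF0 : ∀ s : ℝ, Real.exp (k * s) * k * (∑ i, (P *ᵥ (β s - βstar)) i ^ 2)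
          + Real.exp (k * s) *
            (∑ i, (2:ℕ) * (P *ᵥ (β s - βstar)) i ^ 1 * (P *ᵥ (-(HΓ s *ᵥ (β s - βstar)))) i) ≤ 0 := by
      intro s
      have h1 := hquad s
      have h2 := Real.exp_pos (k * s)
      nlinarith [mul_le_mul_of_nonneg_left h1 (le_of_lt h2)]
    have hanti : Antitone (fun r => Real.exp (k * r) * ∑ i, (P *ᵥ (β r - βstar)) i ^ 2) := by
      apply antitone_of_deriv_nonpos
      · exact fun s => (hF s).differentiableAt
      · intro s
        rw [(hF s).deriv]
        exact hF0 s
    have hle := hanti ht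
    simp only [mul_zero, Real.exp_zero, one_mul] at hle
    have hkexp : Real.exp (-2 * lam * t / ((M:ℝ) + 1)) = (Real.exp (k * t))⁻¹ := by
      rw [← Real.exp_neg]
      congr 1
      rw [hk]; ring
    rw [hkexp]
    rw [inv_mul_eq_div, le_div_iff₀ (Real.exp_pos _)]
    calc (∑ i, (P *ᵥ (β t - βstar)) i ^ 2) * Real.exp (k * t)
        = Real.exp (k * t) * ∑ i, (P *ᵥ (β t - βstar)) i ^ 2 := by ring
      _ ≤ _ := hle
  · exact is_const_of_deriv_eq_zero (fun s => (hc s).differentiableAt)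
      (fun s => (hc s).deriv) t 0
end
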